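/- Let Δ be a positive integer, p an odd prime with p ∤ Δ, a ∈ ℤ with p ∣ a²Δ + 1, and let q be a prime with q ≠ p and ω ∈ ℤ_q with ω² = p. Then the set of elements h of R(1) ⊆ ℍ[ℚ,−Δ,p] such that the lower-left entry of φ(h) is 0 (h viewed in ℍ[ℚ_q,−Δ,p]) equals the ℤ-submodule spanned by e₁ and e₂; in particular this intersection ⋂ₙ R(qⁿ) of the chain of Eichler orders is a ℤ-module of rank 2. -/

import Mathlib

open Quaternion

lemma not_rat_sq {p : ℕ} (hp : p.Prime) (r : ℚ) : r ^ 2 ≠ (p : ℚ) := by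
  intro h
  have hirr := hp.irrational_sqrt
  have h2 : ((r : ℝ)) ^ 2 = (p : ℝ) := by exact_mod_cast congrArg (fun x : ℚ => (x : ℝ)) h
  have : Real.sqrt p = |(r : ℝ)| := by rw [← h2, Real.sqrt_sq_eq_abs]
  rw [this] at hirr
  exact hirr ⟨|r|, by push_cast; rfl⟩


/-- The coefficient-wise inclusion `ℍ[ℚ, -Δ, p] → ℍ[ℚ_q, -Δ, p]`. -/
noncomputable def toLoc (q : ℕ) [Fact q.Prime] (Δ p : ℕ) :
    ℍ[ℚ, -(Δ : ℚ), (p : ℚ)] → ℍ[ℚ_[q], -(Δ : ℚ_[q]), (p : ℚ_[q])] := fun h =>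
  ⟨(h.re : ℚ_[q]), (h.imI : ℚ_[q]), (h.imJ : ℚ_[q]), (h.imK : ℚ_[q])⟩

/-- The `ℚ_q`-linear map `φ : ℍ[ℚ_q, -Δ, p] → M₂(ℚ_q)` sending `α + βi + γj + δk` to
`!![α − γω, β + δω; Δ(−β + δω), α + γω]`, where `ω² = p` in `ℤ_q`. -/
noncomputable def phi (q : ℕ) [Fact q.Prime] (Δ p : ℕ) (ω : ℤ_[q]) :
    ℍ[ℚ_[q], -(Δ : ℚ_[q]), (p : ℚ_[q])] → Matrix (Fin 2) (Fin 2) ℚ_[q] := fun h =>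
  !![h.re - h.imJ * (ω : ℚ_[q]), h.imI + h.imK * (ω : ℚ_[q]);
     (Δ : ℚ_[q]) * (-h.imI + h.imK * (ω : ℚ_[q])), h.re + h.imJ * (ω : ℚ_[q])]

/-- Hashimoto's maximal order `R(1)` in `ℍ[ℚ, -Δ, p]`. -/
def R1 (Δ p : ℕ) (a : ℤ) : Submodule ℤ ℍ[ℚ, -(Δ : ℚ), (p : ℚ)] :=
  Submodule.span ℤ
    {(1 : ℍ[ℚ, -(Δ : ℚ), (p : ℚ)]), ⟨1/2, 0, 1/2, 0⟩, ⟨0, 1/2, 0, 1/2⟩,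
      ⟨0, 0, (a : ℚ) * Δ / p, 1 / (p : ℚ)⟩}

-- the phi entry lemma
lemma phi_entry (q : ℕ) [Fact q.Prime] (Δ p : ℕ) (ω : ℤ_[q]) (h : ℍ[ℚ, -(Δ : ℚ), (p : ℚ)]) :
    phi q Δ p ω (toLoc q Δ p h) 1 0
      = (Δ : ℚ_[q]) * (-(h.imI : ℚ_[q]) + (h.imK : ℚ_[q]) * (ω : ℚ_[q])) := by
  simp [phi, toLoc]

/-- The elements of `R(1)` whose image under `φ` has vanishing lower-left entry form the
`ℤ`-span of `e₁` and `e₂`, a `ℤ`-module of rank `2` (the intersection `⋂ₙ R(qⁿ)`). -/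
theorem stmt_17 (Δ : ℕ) (hΔ : 0 < Δ)
    (p : ℕ) (hp : p.Prime) (hp2 : p ≠ 2) (hpΔ : ¬ p ∣ Δ)
    (a : ℤ) (ha : (p : ℤ) ∣ a ^ 2 * Δ + 1)
    (q : ℕ) [Fact q.Prime] (hqp : q ≠ p)
    (ω : ℤ_[q]) (hω : ω ^ 2 = (p : ℤ_[q])) :
    {h : ℍ[ℚ, -(Δ : ℚ), (p : ℚ)] | h ∈ R1 Δ p a ∧ phi q Δ p ω (toLoc q Δ p h) 1 0 = 0} =
      (Submodule.span ℤ
        {(1 : ℍ[ℚ, -(Δ : ℚ), (p : ℚ)]), ⟨1/2, 0, 1/2, 0⟩} :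
        Set ℍ[ℚ, -(Δ : ℚ), (p : ℚ)]) ∧
    Module.finrank ℤ
      ↥(Submodule.span ℤ {(1 : ℍ[ℚ, -(Δ : ℚ), (p : ℚ)]), ⟨1/2, 0, 1/2, 0⟩}) = 2 := by
  have hp0 : (p : ℚ) ≠ 0 := Nat.cast_ne_zero.mpr hp.pos.ne'
  have hΔ0 : (Δ : ℚ_[q]) ≠ 0 := Nat.cast_ne_zero.mpr hΔ.ne'
  set e2 : ℍ[ℚ, -(Δ : ℚ), (p : ℚ)] := ⟨1/2, 0, 1/2, 0⟩ with he2
  set e3 : ℍ[ℚ, -(Δ : ℚ), (p : ℚ)] := ⟨0, 1/2, 0, 1/2⟩ with he3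
  set e4 : ℍ[ℚ, -(Δ : ℚ), (p : ℚ)] := ⟨0, 0, (a : ℚ) * Δ / p, 1 / (p : ℚ)⟩ with he4
  constructor
  · ext h
    simp only [Set.mem_setOf_eq, SetLike.mem_coe]
    constructor
    · rintro ⟨hR, hphi⟩
      rw [R1, Submodule.mem_span_insert] at hR
      obtain ⟨c1, z1, hz1, rfl⟩ := hR
      rw [Submodule.mem_span_insert] at hz1
      obtain ⟨c2, z2, hz2, rfl⟩ := hz1
      rw [Submodule.mem_span_insert] at hz2
      obtain ⟨c3, z3, hz3, rfl⟩ := hz2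
      rw [Submodule.mem_span_singleton] at hz3
      obtain ⟨c4, rfl⟩ := hz3
      set h := c1 • (1 : ℍ[ℚ, -(Δ : ℚ), (p : ℚ)]) + (c2 • e2 + (c3 • e3 + c4 • e4)) with hh
      have hI : h.imI = (c3 : ℚ) / 2 := by
        simp [hh, he2, he3, he4]; ring
      have hK : h.imK = (c3 : ℚ) / 2 + (c4 : ℚ) / p := by
        simp [hh, he2, he3, he4]; field_simp
      rw [phi_entry] at hphi
      have hkey : -(h.imI : ℚ_[q]) + (h.imK : ℚ_[q]) * (ω : ℚ_[q]) = 0 :=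
        (mul_eq_zero.mp hphi).resolve_left hΔ0
      have hK0 : h.imK = 0 := by
        by_contra hne
        have hKq : (h.imK : ℚ_[q]) ≠ 0 := by exact_mod_cast hne
        have hωeq : (ω : ℚ_[q]) = ((h.imI / h.imK : ℚ) : ℚ_[q]) := by
          push_cast
          field_simp at hkey ⊢
          linear_combination hkey
        have hω2 : ((ω : ℚ_[q])) ^ 2 = ((p : ℚ) : ℚ_[q]) := by
          exact_mod_cast congrArg (fun x : ℤ_[q] => (x : ℚ_[q])) hω
        rw [hωeq, ← Rat.cast_pow] at hω2
        exact not_rat_sq hp _ (Rat.cast_injective hω2)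
      have hI0 : h.imI = 0 := by
        rw [hK0] at hkey
        push_cast at hkey
        simpa using hkey
      have hc3 : c3 = 0 := by
        have := hI0
        rw [hI] at this
        exact_mod_cast (by linarith [this] : (c3 : ℚ) = 0)
      have hc4 : c4 = 0 := by
        have := hK0
        rw [hK, hc3] at this
        push_cast at this
        have h4 : (c4 : ℚ) = 0 := by field_simp at this; simp at this; exact_mod_cast this
        exact_mod_cast h4
      rw [Submodule.mem_span_insert]
      refine ⟨c1, c2 • e2, Submodule.smul_mem _ _ (Submodule.subset_span rfl), ?_⟩
      rw [hh, hc3, hc4]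
      simp
    · intro hmem
      rw [Submodule.mem_span_insert] at hmem
      obtain ⟨c1, z1, hz1, rfl⟩ := hmem
      rw [Submodule.mem_span_singleton] at hz1
      obtain ⟨c2, rfl⟩ := hz1
      constructor
      · apply Submodule.add_mem
        · exact Submodule.smul_mem _ _ (Submodule.subset_span (by left; rfl))
        · exact Submodule.smul_mem _ _ (Submodule.subset_span (by right; left; rfl))
      · rw [phi_entry]
        have h1 : (c1 • (1 : ℍ[ℚ, -(Δ : ℚ), (p : ℚ)]) + c2 • e2).imI = 0 := by
          simp [he2]
        have h2 : (c1 • (1 : ℍ[ℚ, -(Δ : ℚ), (p : ℚ)]) + c2 • e2).imK = 0 := by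
          simp [he2]
        rw [h1, h2]
        simp
  · have hrange : ({(1 : ℍ[ℚ, -(Δ : ℚ), (p : ℚ)]), e2} : Set _)
        = Set.range ![(1 : ℍ[ℚ, -(Δ : ℚ), (p : ℚ)]), e2] := by
      ext z
      simp [Fin.exists_fin_two]
      tauto
    rw [hrange, finrank_span_eq_card ?_]
    · simp
    · rw [LinearIndependent.pair_iff]
      intro s t hst
      have hre := congrArg QuaternionAlgebra.re hst
      have hJ := congrArg QuaternionAlgebra.imJ hst
      simp [he2] at hre hJ
      have ht : t = 0 := by exact_mod_cast hJ
      refine ⟨?_, ht⟩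
      rw [ht] at hre
      simpa using hre
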